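/- On R⁷ with coordinates (t,x,y,z,p,q,r), for smooth functions f,g of (t,z), let X₃(f) = f x∂_x + f y∂_y + (f p − x f_t)∂_p + (f q − (1/2)x f_z − (1/2)y f_t)∂_q + (f r − y f_z)∂_r and X₄(g) = g∂_x − g_t∂_p − (1/2)g_z∂_q. Then [X₃(f), X₄(g)] = −X₄(fg). -/

import Mathlib

/-- Partial derivative in `t` of a function of `(t,z)`. -/
noncomputable def pdt (f : ℝ × ℝ → ℝ) : ℝ × ℝ → ℝ := fun w => fderiv ℝ f w (1, 0)

/-- Partial derivative in `z` of a function of `(t,z)`. -/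
noncomputable def pdz (f : ℝ × ℝ → ℝ) : ℝ × ℝ → ℝ := fun w => fderiv ℝ f w (0, 1)

/-- Lie bracket of vector fields on `ℝ⁷`, viewed as maps `ℝ⁷ → ℝ⁷`. -/
noncomputable def vbracket (X Y : (Fin 7 → ℝ) → (Fin 7 → ℝ)) : (Fin 7 → ℝ) → (Fin 7 → ℝ) :=
  fun v => fderiv ℝ Y v (X v) - fderiv ℝ X v (Y v)

/-- Coordinates on `ℝ⁷` are `(t,x,y,z,p,q,r)`, indexed `0,…,6`.
`X₃(f) = f x∂_x + f y∂_y + (f p − x f_t)∂_p + (f q − (1/2)x f_z − (1/2)y f_t)∂_q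
         + (f r − y f_z)∂_r`. -/
noncomputable def X3 (f : ℝ × ℝ → ℝ) : (Fin 7 → ℝ) → (Fin 7 → ℝ) :=
  fun v =>
    ![0,
      f (v 0, v 3) * v 1,
      f (v 0, v 3) * v 2,
      0,
      f (v 0, v 3) * v 4 - v 1 * pdt f (v 0, v 3),
      f (v 0, v 3) * v 5 - (1 / 2) * v 1 * pdz f (v 0, v 3) - (1 / 2) * v 2 * pdt f (v 0, v 3),
      f (v 0, v 3) * v 6 - v 2 * pdz f (v 0, v 3)]

/-- `X₄(g) = g ∂_x − g_t ∂_p − (1/2) g_z ∂_q`. -/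
noncomputable def X4 (g : ℝ × ℝ → ℝ) : (Fin 7 → ℝ) → (Fin 7 → ℝ) :=
  fun v => ![0, g (v 0, v 3), 0, 0, -pdt g (v 0, v 3), -(1 / 2) * pdz g (v 0, v 3), 0]

section helperLemmas

/-- The linear projection `v ↦ (v 0, v 3)`. -/
noncomputable def L7 : (Fin 7 → ℝ) →L[ℝ] ℝ × ℝ :=
  (ContinuousLinearMap.proj 0).prod (ContinuousLinearMap.proj 3)

lemma comp_eq03 (h : ℝ × ℝ → ℝ) : (fun v : Fin 7 → ℝ => h (v 0, v 3)) = h ∘ L7 := rfl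

lemma diff_comp03 {h : ℝ × ℝ → ℝ} (hh : Differentiable ℝ h) :
    Differentiable ℝ (fun v : Fin 7 → ℝ => h (v 0, v 3)) := by
  rw [comp_eq03]; exact hh.comp L7.differentiable

lemma fderiv_comp03 {h : ℝ × ℝ → ℝ} (hh : Differentiable ℝ h) (v u : Fin 7 → ℝ)
    (h0 : u 0 = 0) (h3 : u 3 = 0) :
    fderiv ℝ (fun v : Fin 7 → ℝ => h (v 0, v 3)) v u = 0 := by
  rw [comp_eq03, fderiv_comp v hh.differentiableAt L7.differentiableAt, L7.fderiv]
  have : L7 u = (0, 0) := by simp [L7, h0, h3]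
  simp [this]; exact (fderiv ℝ h (L7 v)).map_zero

lemma diff_pdt {h : ℝ × ℝ → ℝ} (hh : ContDiff ℝ (⊤ : ℕ∞) h) : Differentiable ℝ (pdt h) :=
  ((hh.fderiv_right (m := (⊤ : ℕ∞)) (by simp)).clm_apply
    (contDiff_const : ContDiff ℝ (⊤ : ℕ∞) (fun _ : ℝ × ℝ => ((1:ℝ), (0:ℝ))))).differentiable (by simp)

lemma diff_pdz {h : ℝ × ℝ → ℝ} (hh : ContDiff ℝ (⊤ : ℕ∞) h) : Differentiable ℝ (pdz h) :=
  ((hh.fderiv_right (m := (⊤ : ℕ∞)) (by simp)).clm_apply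
    (contDiff_const : ContDiff ℝ (⊤ : ℕ∞) (fun _ : ℝ × ℝ => ((0:ℝ), (1:ℝ))))).differentiable (by simp)

lemma fd_mul {a b : (Fin 7 → ℝ) → ℝ} {v : Fin 7 → ℝ} (u : Fin 7 → ℝ)
    (ha : DifferentiableAt ℝ a v) (hb : DifferentiableAt ℝ b v) :
    fderiv ℝ (fun w => a w * b w) v u = a v * fderiv ℝ b v u + b v * fderiv ℝ a v u := by
  rw [fderiv_fun_mul ha hb]; simp

lemma fd_sub {a b : (Fin 7 → ℝ) → ℝ} {v : Fin 7 → ℝ} (u : Fin 7 → ℝ)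
    (ha : DifferentiableAt ℝ a v) (hb : DifferentiableAt ℝ b v) :
    fderiv ℝ (fun w => a w - b w) v u = fderiv ℝ a v u - fderiv ℝ b v u := by
  rw [fderiv_fun_sub ha hb]; simp

lemma diff_coord (i : Fin 7) : Differentiable ℝ (fun w : Fin 7 → ℝ => w i) := by
  have e : (fun w : Fin 7 → ℝ => w i) = (ContinuousLinearMap.proj i : (Fin 7 → ℝ) →L[ℝ] ℝ) := rfl
  rw [e]; exact (ContinuousLinearMap.proj i : (Fin 7 → ℝ) →L[ℝ] ℝ).differentiable

lemma fd_coord (i : Fin 7) (v u : Fin 7 → ℝ) :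
    fderiv ℝ (fun w : Fin 7 → ℝ => w i) v u = u i := by
  have e : (fun w : Fin 7 → ℝ => w i) = (ContinuousLinearMap.proj i : (Fin 7 → ℝ) →L[ℝ] ℝ) := rfl
  rw [e, ContinuousLinearMap.fderiv]; rfl

lemma pdt_mul {f g : ℝ × ℝ → ℝ} (hf : ContDiff ℝ (⊤ : ℕ∞) f) (hg : ContDiff ℝ (⊤ : ℕ∞) g) (w : ℝ × ℝ) :
    pdt (fun w => f w * g w) w = f w * pdt g w + g w * pdt f w := by
  unfold pdt
  rw [fderiv_fun_mul (hf.differentiable (by simp)).differentiableAt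
    (hg.differentiable (by simp)).differentiableAt]
  simp

lemma pdz_mul {f g : ℝ × ℝ → ℝ} (hf : ContDiff ℝ (⊤ : ℕ∞) f) (hg : ContDiff ℝ (⊤ : ℕ∞) g) (w : ℝ × ℝ) :
    pdz (fun w => f w * g w) w = f w * pdz g w + g w * pdz f w := by
  unfold pdz
  rw [fderiv_fun_mul (hf.differentiable (by simp)).differentiableAt
    (hg.differentiable (by simp)).differentiableAt]
  simp

end helperLemmas

theorem stmt_17 (f g : ℝ × ℝ → ℝ) (hf : ContDiff ℝ (⊤ : ℕ∞) f) (hg : ContDiff ℝ (⊤ : ℕ∞) g) :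
    vbracket (X3 f) (X4 g) = -X4 (fun w => f w * g w) := by
  have hfd : Differentiable ℝ f := hf.differentiable (by simp)
  have hgd : Differentiable ℝ g := hg.differentiable (by simp)
  have hFt : Differentiable ℝ (pdt f) := diff_pdt hf
  have hFz : Differentiable ℝ (pdz f) := diff_pdz hf
  have hGt : Differentiable ℝ (pdt g) := diff_pdt hg
  have hGz : Differentiable ℝ (pdz g) := diff_pdz hg
  funext v
  -- Part 1 : the derivative of X4 g along X3 f v vanishes
  have hX30 : X3 f v 0 = 0 := rfl
  have hX33 : X3 f v 3 = 0 := rfl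
  have part1 : fderiv ℝ (X4 g) v (X3 f v) = 0 := by
    set V : ℝ × ℝ → (Fin 7 → ℝ) :=
      fun w => ![0, g w, 0, 0, -pdt g w, -(1/2) * pdz g w, 0] with hV
    have e : X4 g = V ∘ L7 := rfl
    have hVd : DifferentiableAt ℝ V (L7 v) := by
      rw [differentiableAt_pi]
      intro i
      fin_cases i
      · exact differentiableAt_const _
      · exact hgd.differentiableAt
      · exact differentiableAt_const _
      · exact differentiableAt_const _
      · exact hGt.differentiableAt.neg
      · exact hGz.differentiableAt.const_mul _
      · exact differentiableAt_const _
    rw [e, fderiv_comp v hVd L7.differentiableAt, ContinuousLinearMap.fderiv]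
    have hL : L7 (X3 f v) = (0, 0) := by simp [L7, hX30, hX33]
    simp [hL]; exact (fderiv ℝ V (L7 v)).map_zero
  -- Part 2 : the derivative of X3 f along X4 g v equals X4 (fg) v
  set u : Fin 7 → ℝ := X4 g v with hu
  have u0 : u 0 = 0 := rfl
  have u1 : u 1 = g (v 0, v 3) := rfl
  have u2 : u 2 = 0 := rfl
  have u3 : u 3 = 0 := rfl
  have u4 : u 4 = -pdt g (v 0, v 3) := rfl
  have u5 : u 5 = -(1/2) * pdz g (v 0, v 3) := rfl
  have u6 : u 6 = 0 := rfl
  have hd : ∀ i, DifferentiableAt ℝ (fun w => X3 f w i) v := by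
    intro i
    fin_cases i
    · exact differentiableAt_const _
    · exact ((diff_comp03 hfd).mul (diff_coord 1)).differentiableAt
    · exact ((diff_comp03 hfd).mul (diff_coord 2)).differentiableAt
    · exact differentiableAt_const _
    · exact (((diff_comp03 hfd).mul (diff_coord 4)).sub
        ((diff_coord 1).mul (diff_comp03 hFt))).differentiableAt
    · exact ((((diff_comp03 hfd).mul (diff_coord 5)).sub
        (((differentiable_const _).mul (diff_coord 1)).mul (diff_comp03 hFz))).sub
        (((differentiable_const _).mul (diff_coord 2)).mul (diff_comp03 hFt))).differentiableAt
    · exact (((diff_comp03 hfd).mul (diff_coord 6)).sub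
        ((diff_coord 2).mul (diff_comp03 hFz))).differentiableAt
  have part2 : fderiv ℝ (X3 f) v u = X4 (fun w => f w * g w) v := by
    rw [fderiv_pi hd]
    funext i
    rw [ContinuousLinearMap.pi_apply]
    fin_cases i
    · show fderiv ℝ (fun _ : Fin 7 → ℝ => (0:ℝ)) v u = 0
      simp
    · -- component 1
      show fderiv ℝ (fun w : Fin 7 → ℝ => f (w 0, w 3) * w 1) v u
          = f (v 0, v 3) * g (v 0, v 3)
      rw [fd_mul u (diff_comp03 hfd).differentiableAt (diff_coord 1).differentiableAt,
        fd_coord, fderiv_comp03 hfd v u u0 u3, u1]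
      ring
    · -- component 2
      show fderiv ℝ (fun w : Fin 7 → ℝ => f (w 0, w 3) * w 2) v u = 0
      rw [fd_mul u (diff_comp03 hfd).differentiableAt (diff_coord 2).differentiableAt,
        fd_coord, fderiv_comp03 hfd v u u0 u3, u2]
      ring
    · show fderiv ℝ (fun _ : Fin 7 → ℝ => (0:ℝ)) v u = 0
      simp
    · -- component 4
      show fderiv ℝ (fun w : Fin 7 → ℝ => f (w 0, w 3) * w 4 - w 1 * pdt f (w 0, w 3)) v u
          = -pdt (fun w => f w * g w) (v 0, v 3)
      rw [fd_sub u (((diff_comp03 hfd).fun_mul (diff_coord 4)).differentiableAt)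
          (((diff_coord 1).fun_mul (diff_comp03 hFt)).differentiableAt),
        fd_mul u (diff_comp03 hfd).differentiableAt (diff_coord 4).differentiableAt,
        fd_mul u (diff_coord 1).differentiableAt (diff_comp03 hFt).differentiableAt,
        fd_coord, fd_coord, fderiv_comp03 hfd v u u0 u3, fderiv_comp03 hFt v u u0 u3,
        u1, u4, pdt_mul hf hg]
      ring
    · -- component 5
      show fderiv ℝ (fun w : Fin 7 → ℝ =>
            f (w 0, w 3) * w 5 - 1 / 2 * w 1 * pdz f (w 0, w 3)
              - 1 / 2 * w 2 * pdt f (w 0, w 3)) v u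
          = -(1 / 2) * pdz (fun w => f w * g w) (v 0, v 3)
      rw [fd_sub u ((((diff_comp03 hfd).fun_mul (diff_coord 5)).fun_sub
            (((differentiable_const _).fun_mul (diff_coord 1)).fun_mul (diff_comp03 hFz))).differentiableAt)
          ((((differentiable_const _).fun_mul (diff_coord 2)).fun_mul (diff_comp03 hFt)).differentiableAt),
        fd_sub u (((diff_comp03 hfd).fun_mul (diff_coord 5)).differentiableAt)
          ((((differentiable_const _).fun_mul (diff_coord 1)).fun_mul (diff_comp03 hFz)).differentiableAt),
        fd_mul u (diff_comp03 hfd).differentiableAt (diff_coord 5).differentiableAt,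
        fd_mul u (((differentiable_const _).fun_mul (diff_coord 1)).differentiableAt)
          (diff_comp03 hFz).differentiableAt,
        fd_mul u (((differentiable_const _).fun_mul (diff_coord 2)).differentiableAt)
          (diff_comp03 hFt).differentiableAt,
        fd_mul u (differentiableAt_const _) (diff_coord 1).differentiableAt,
        fd_mul u (differentiableAt_const _) (diff_coord 2).differentiableAt,
        fd_coord, fd_coord, fd_coord, fderiv_comp03 hfd v u u0 u3,
        fderiv_comp03 hFz v u u0 u3, fderiv_comp03 hFt v u u0 u3,
        u1, u2, u5, pdz_mul hf hg]
      simp only [fderiv_fun_const, Pi.zero_apply, ContinuousLinearMap.zero_apply]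
      ring
    · -- component 6
      show fderiv ℝ (fun w : Fin 7 → ℝ => f (w 0, w 3) * w 6 - w 2 * pdz f (w 0, w 3)) v u = 0
      rw [fd_sub u (((diff_comp03 hfd).fun_mul (diff_coord 6)).differentiableAt)
          (((diff_coord 2).fun_mul (diff_comp03 hFz)).differentiableAt),
        fd_mul u (diff_comp03 hfd).differentiableAt (diff_coord 6).differentiableAt,
        fd_mul u (diff_coord 2).differentiableAt (diff_comp03 hFz).differentiableAt,
        fd_coord, fd_coord, fderiv_comp03 hfd v u u0 u3, fderiv_comp03 hFz v u u0 u3,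
        u2, u6]
      ring
  show fderiv ℝ (X4 g) v (X3 f v) - fderiv ℝ (X3 f) v u = _
  rw [part1, part2]
  simp
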